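/- There exist a unit vector n ∈ ℝ³ with n₃ > 0 and a 6 × 3 real matrix L of rank 3 whose rows are the six ring lights l_k = (cos(kπ/3)/√2, sin(kπ/3)/√2, 1/√2), k = 0, …, 5, such that at least one clamped shading satisfies max(⟪n, l_k⟫, 0) ≠ ⟪n, l_k⟫ and the ordinary least-squares estimate (Lᵀ L)⁻¹ Lᵀ s computed from the clamped shading vector s = (max(⟪n, l_k⟫, 0))_{k} is not equal to n. That is, applying ordinary least squares directly to the clamped shading sequence (without discarding zero shadings) yields a biased normal estimate. -/

import Mathlib

open Matrix

set_option maxHeartbeats 1000000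

/-- The `k`-th of the six ring lights at elevation 45° with azimuths `kπ/3`,
as a plain vector in `ℝ³`. -/
noncomputable def ringLight6 (k : Fin 6) : Fin 3 → ℝ :=
  ![Real.cos (k * Real.pi / 3) / Real.sqrt 2,
    Real.sin (k * Real.pi / 3) / Real.sqrt 2,
    1 / Real.sqrt 2]

private lemma rl0 : ringLight6 0 = ![1 / Real.sqrt 2, 0, 1 / Real.sqrt 2] := by
  simp [ringLight6]

private lemma rl1 : ringLight6 1 = ![(1/2) / Real.sqrt 2, (Real.sqrt 3/2) / Real.sqrt 2, 1 / Real.sqrt 2] := by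
  norm_num [ringLight6, Real.cos_pi_div_three, Real.sin_pi_div_three]

set_option linter.unreachableTactic false in
set_option linter.unusedTactic false in
private lemma rl2 : ringLight6 2 = ![(-(1/2)) / Real.sqrt 2, (Real.sqrt 3/2) / Real.sqrt 2, 1 / Real.sqrt 2] := by
  have h : ((2:Fin 6) : ℕ) = 2 := rfl
  have e : ((2:ℕ):ℝ) * Real.pi / 3 = Real.pi - Real.pi/3 := by ring
  rw [ringLight6, h, e, Real.cos_pi_sub, Real.sin_pi_sub]
  norm_num [Real.cos_pi_div_three, Real.sin_pi_div_three]

private lemma rl3 : ringLight6 3 = ![(-1) / Real.sqrt 2, 0, 1 / Real.sqrt 2] := by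
  have h : ((3:Fin 6) : ℕ) = 3 := rfl
  have e : ((3:ℕ):ℝ) * Real.pi / 3 = Real.pi := by ring
  rw [ringLight6, h, e, Real.cos_pi, Real.sin_pi]
  norm_num

private lemma rl4 : ringLight6 4 = ![(-(1/2)) / Real.sqrt 2, (-(Real.sqrt 3/2)) / Real.sqrt 2, 1 / Real.sqrt 2] := by
  have h : ((4:Fin 6) : ℕ) = 4 := rfl
  have e : ((4:ℕ):ℝ) * Real.pi / 3 = Real.pi + Real.pi/3 := by ring
  rw [ringLight6, h, e, Real.cos_add, Real.sin_add]
  norm_num [Real.cos_pi_div_three, Real.sin_pi_div_three]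

private lemma rl5 : ringLight6 5 = ![(1/2) / Real.sqrt 2, (-(Real.sqrt 3/2)) / Real.sqrt 2, 1 / Real.sqrt 2] := by
  have h : ((5:Fin 6) : ℕ) = 5 := rfl
  have e : ((5:ℕ):ℝ) * Real.pi / 3 = 2*Real.pi - Real.pi/3 := by ring
  rw [ringLight6, h, e, Real.cos_two_pi_sub, Real.sin_two_pi_sub]
  norm_num [Real.cos_pi_div_three, Real.sin_pi_div_three]

private noncomputable def nVec : Fin 3 → ℝ := ![Real.sqrt 3/2, 0, 1/2]

private noncomputable def Lmat : Matrix (Fin 6) (Fin 3) ℝ := Matrix.of (fun k => ringLight6 k)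

private lemma sqrt2_mul : Real.sqrt 2 * Real.sqrt 2 = 2 := Real.mul_self_sqrt (by norm_num)
private lemma sqrt3_mul : Real.sqrt 3 * Real.sqrt 3 = 3 := Real.mul_self_sqrt (by norm_num)
private lemma sqrt2_pos : (0:ℝ) < Real.sqrt 2 := Real.sqrt_pos.mpr (by norm_num)
private lemma sqrt3_gt1 : 1 < Real.sqrt 3 := by nlinarith [sqrt3_mul, Real.sqrt_nonneg 3]
private lemma sqrt3_lt2 : Real.sqrt 3 < 2 := by nlinarith [sqrt3_mul, Real.sqrt_nonneg 3]

private lemma hM : Lmatᵀ * Lmat = !![3/2,0,0;0,3/2,0;0,0,3] := by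
  have h2 : Real.sqrt 2 ^ 2 = 2 := Real.sq_sqrt (by norm_num)
  have h3 : Real.sqrt 3 ^ 2 = 3 := Real.sq_sqrt (by norm_num)
  have h2i : (Real.sqrt 2)⁻¹ ^ 2 = (2:ℝ)⁻¹ := by rw [inv_pow, h2]
  have h3i : (Real.sqrt 3)⁻¹ ^ 2 = (3:ℝ)⁻¹ := by rw [inv_pow, h3]
  ext i j
  fin_cases i <;> fin_cases j <;>
    simp [Lmat, Matrix.mul_apply, Fin.sum_univ_six, rl0, rl1, rl2, rl3, rl4, rl5,
      Matrix.vecHead, Matrix.vecTail] <;>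
    ring_nf <;> simp [h2, h3, h2i, h3i] <;> ring_nf

private lemma hInv : (!![3/2,0,0;0,3/2,0;0,0,3] : Matrix (Fin 3) (Fin 3) ℝ)⁻¹
    = !![2/3,0,0;0,2/3,0;0,0,1/3] := by
  apply Matrix.inv_eq_right_inv
  ext i j
  fin_cases i <;> fin_cases j <;>
    simp [Matrix.mul_apply, Fin.sum_univ_three, Matrix.one_apply,
      Matrix.vecHead, Matrix.vecTail] <;> norm_num

private lemma hd0 : nVec ⬝ᵥ ringLight6 0 = (Real.sqrt 3 + 1)/(2*Real.sqrt 2) := by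
  simp [nVec, dotProduct, Fin.sum_univ_three, rl0]
  field_simp
  try ring
private lemma hd1 : nVec ⬝ᵥ ringLight6 1 = (Real.sqrt 3/2 + 1)/(2*Real.sqrt 2) := by
  simp [nVec, dotProduct, Fin.sum_univ_three, rl1]
  field_simp
  try ring
private lemma hd2 : nVec ⬝ᵥ ringLight6 2 = (-(Real.sqrt 3/2) + 1)/(2*Real.sqrt 2) := by
  simp [nVec, dotProduct, Fin.sum_univ_three, rl2]
  field_simp
  try ring
private lemma hd3 : nVec ⬝ᵥ ringLight6 3 = (-Real.sqrt 3 + 1)/(2*Real.sqrt 2) := by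
  simp [nVec, dotProduct, Fin.sum_univ_three, rl3]
  field_simp
  try ring
private lemma hd4 : nVec ⬝ᵥ ringLight6 4 = (-(Real.sqrt 3/2) + 1)/(2*Real.sqrt 2) := by
  simp [nVec, dotProduct, Fin.sum_univ_three, rl4]
  field_simp
  try ring
private lemma hd5 : nVec ⬝ᵥ ringLight6 5 = (Real.sqrt 3/2 + 1)/(2*Real.sqrt 2) := by
  simp [nVec, dotProduct, Fin.sum_univ_three, rl5]
  field_simp
  try ring

private lemma hd3neg : nVec ⬝ᵥ ringLight6 3 < 0 := by
  rw [hd3]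
  apply div_neg_of_neg_of_pos
  · nlinarith [sqrt3_gt1]
  · nlinarith [sqrt2_pos]

private lemma hm0 : max (nVec ⬝ᵥ ringLight6 0) 0 = nVec ⬝ᵥ ringLight6 0 := by
  rw [max_eq_left]; rw [hd0]; positivity
private lemma hm1 : max (nVec ⬝ᵥ ringLight6 1) 0 = nVec ⬝ᵥ ringLight6 1 := by
  rw [max_eq_left]; rw [hd1]; positivity
private lemma hm2 : max (nVec ⬝ᵥ ringLight6 2) 0 = nVec ⬝ᵥ ringLight6 2 := by
  rw [max_eq_left]; rw [hd2]
  apply div_nonneg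
  · nlinarith [sqrt3_lt2]
  · nlinarith [sqrt2_pos]
private lemma hm3 : max (nVec ⬝ᵥ ringLight6 3) 0 = 0 := max_eq_right hd3neg.le
private lemma hm4 : max (nVec ⬝ᵥ ringLight6 4) 0 = nVec ⬝ᵥ ringLight6 4 := by
  rw [max_eq_left]; rw [hd4]
  apply div_nonneg
  · nlinarith [sqrt3_lt2]
  · nlinarith [sqrt2_pos]
private lemma hm5 : max (nVec ⬝ᵥ ringLight6 5) 0 = nVec ⬝ᵥ ringLight6 5 := by
  rw [max_eq_left]; rw [hd5]; positivity

private lemma hs0 : max (nVec ⬝ᵥ ringLight6 0) 0 = (Real.sqrt 3 + 1)/(2*Real.sqrt 2) := hm0.trans hd0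
private lemma hs1 : max (nVec ⬝ᵥ ringLight6 1) 0 = (Real.sqrt 3/2 + 1)/(2*Real.sqrt 2) := hm1.trans hd1
private lemma hs2 : max (nVec ⬝ᵥ ringLight6 2) 0 = (-(Real.sqrt 3/2) + 1)/(2*Real.sqrt 2) := hm2.trans hd2
private lemma hs4 : max (nVec ⬝ᵥ ringLight6 4) 0 = (-(Real.sqrt 3/2) + 1)/(2*Real.sqrt 2) := hm4.trans hd4
private lemma hs5 : max (nVec ⬝ᵥ ringLight6 5) 0 = (Real.sqrt 3/2 + 1)/(2*Real.sqrt 2) := hm5.trans hd5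

private lemma hsvec : (fun k => max (nVec ⬝ᵥ ringLight6 k) 0) =
    ![(Real.sqrt 3 + 1)/(2*Real.sqrt 2), (Real.sqrt 3/2 + 1)/(2*Real.sqrt 2),
      (-(Real.sqrt 3/2) + 1)/(2*Real.sqrt 2), 0,
      (-(Real.sqrt 3/2) + 1)/(2*Real.sqrt 2), (Real.sqrt 3/2 + 1)/(2*Real.sqrt 2)] := by
  funext k
  fin_cases k
  · exact hs0
  · exact hs1
  · exact hs2
  · exact hm3
  · exact hs4
  · exact hs5

private lemma hrank : Lmat.rank = 3 := by
  rw [← Matrix.rank_transpose_mul_self, hM]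
  have hu : IsUnit (!![3/2,0,0;0,3/2,0;0,0,3] : Matrix (Fin 3) (Fin 3) ℝ) := by
    rw [Matrix.isUnit_iff_isUnit_det]
    simp [Matrix.det_fin_three]
  rw [Matrix.rank_of_isUnit _ hu]
  simp

private lemma hfinal :
    ((Lmatᵀ * Lmat)⁻¹ * Lmatᵀ).mulVec (fun k => max (nVec ⬝ᵥ ringLight6 k) 0) ≠ nVec := by
  rw [hM, hInv, hsvec]
  intro heq
  have h2' := congrFun heq 2
  simp only [Matrix.mulVec, dotProduct, Fin.sum_univ_three, Fin.sum_univ_six,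
    Matrix.mul_apply, Matrix.transpose_apply] at h2'
  have hv5 : ∀ (a b c d e f : ℝ), ![a,b,c,d,e,f] (5:Fin 6) = f := fun _ _ _ _ _ _ => rfl
  simp [Lmat, nVec, rl0, rl1, rl2, rl3, rl4, rl5, Matrix.vecHead, Matrix.vecTail, hv5] at h2'
  have h2i : (Real.sqrt 2)⁻¹ ^ 2 = (2:ℝ)⁻¹ := by
    rw [inv_pow, Real.sq_sqrt] <;> norm_num
    
  ring_nf at h2'
  rw [h2i] at h2'
  nlinarith [h2', sqrt3_gt1, sqrt2_pos, sqrt2_mul]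

/-- There is a unit vector `n` with `n₃ > 0` and a rank-3 matrix
`L` whose rows are the six ring lights `l_k = (cos(kπ/3)/√2, sin(kπ/3)/√2, 1/√2)` such
that some clamped shading differs from the raw dot product, and the ordinary
least-squares estimate `(Lᵀ L)⁻¹ Lᵀ s` computed from the clamped shading vector
`s = (max(⟪n, l_k⟫, 0))ₖ` is not equal to `n`: applying OLS directly to the clamped
shading sequence is biased. -/
theorem clamped_ols_biased :
    ∃ (n : Fin 3 → ℝ) (L : Matrix (Fin 6) (Fin 3) ℝ),
      (∑ i, n i ^ 2 = 1) ∧ 0 < n 2 ∧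
      (∀ k : Fin 6, L k = ringLight6 k) ∧ L.rank = 3 ∧
      (∃ k : Fin 6, max (n ⬝ᵥ ringLight6 k) 0 ≠ n ⬝ᵥ ringLight6 k) ∧
      ((Lᵀ * L)⁻¹ * Lᵀ).mulVec (fun k => max (n ⬝ᵥ ringLight6 k) 0) ≠ n := by
  refine ⟨nVec, Lmat, ?_, ?_, fun k => rfl, hrank, ⟨3, ?_⟩, hfinal⟩
  · simp [nVec, Fin.sum_univ_three]
    nlinarith [sqrt3_mul]
  · norm_num [nVec, Matrix.cons_val_two, Matrix.vecHead, Matrix.vecTail]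
  · rw [hm3]
    exact fun h => absurd (h ▸ hd3neg) (by norm_num)
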